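/- arXiv:1311.7262 — 6 statements merged into one kernel-verified Lean document; each statement's English description precedes it below -/
import Mathlib

section
/- For every finite nonempty distributive lattice L, 2·n(L) ≤ |L|·(|L| − |J|), i.e. the number of ordered pairs of incomparable elements satisfies |{(a,b) ∈ L × L : a ≁ b}| ≤ |L|·(|L| − |J|). -/
open Finset

/-- For every finite nonempty distributive lattice `L`, the number of
ordered pairs of incomparable elements is at most `|L| * (|L| - |J|)`. -/
theorem two_nL_le (L : Type*) [DistribLattice L] [Fintype L] [Nonempty L] :
    {p : L × L | ¬ p.1 ≤ p.2 ∧ ¬ p.2 ≤ p.1}.ncard ≤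
      Fintype.card L * (Fintype.card L - {a : L | SupIrred a}.ncard) := by
  classical
  set J : Finset L := univ.filter (fun b => SupIrred b) with hJ
  have hJcard : {a : L | SupIrred a}.ncard = J.card := by
    simp [hJ, Set.ncard_eq_toFinset_card', Set.toFinset_setOf]
  set F : Finset (L × L) := univ.filter (fun p => ¬ p.1 ≤ p.2 ∧ ¬ p.2 ≤ p.1) with hF
  have hFcard : {p : L × L | ¬ p.1 ≤ p.2 ∧ ¬ p.2 ≤ p.1}.ncard = F.card := by
    simp [hF, Set.ncard_eq_toFinset_card', Set.toFinset_setOf]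
  rw [hJcard, hFcard]
  -- key: for each a, there are at least J.card elements comparable to a
  have key : ∀ a : L, J.card ≤ (univ.filter (fun b => a ≤ b ∨ b ≤ a)).card := by
    intro a
    apply Finset.card_le_card_of_injOn (fun j => if j ≤ a then j else a ⊔ j)
    · intro j hj
      simp only [mem_filter, mem_univ, true_and]
      by_cases h : j ≤ a
      · simp [h]
      · simp [h, le_sup_left]
    · intro j hj k hk hjk
      simp only [hJ, coe_filter, mem_univ, true_and, Set.mem_setOf_eq] at hj hk
      have hle : ∀ x y : L, SupIrred x → ¬ x ≤ a → a ⊔ x = a ⊔ y → x ≤ y := by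
        intro x y hx hxa hxy
        have hx' : (x ⊓ a) ⊔ (x ⊓ y) = x := by
          rw [← inf_sup_left]
          rw [← hxy]
          exact inf_eq_left.mpr le_sup_right
        rcases hx.2 hx' with h | h
        · exact absurd (inf_eq_left.mp h) hxa
        · exact inf_eq_left.mp h
      by_cases h1 : j ≤ a <;> by_cases h2 : k ≤ a <;>
        simp only [h1, h2, if_true, if_false] at hjk
      · exact hjk
      · exact absurd (le_sup_right.trans (hjk ▸ h1 : a ⊔ k ≤ a)) h2
      · exact absurd (le_sup_right.trans ((hjk.symm) ▸ h2 : a ⊔ j ≤ a)) h1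
      · exact le_antisymm (hle j k hj h1 hjk) (hle k j hk h2 hjk.symm)
  -- fiberwise count
  have hsum : F.card = ∑ a : L, (univ.filter (fun b => ¬ a ≤ b ∧ ¬ b ≤ a)).card := by
    rw [Finset.card_eq_sum_card_fiberwise (f := Prod.fst) (t := univ)
      (fun p _ => mem_univ _)]
    refine Finset.sum_congr rfl fun a _ => ?_
    apply Finset.card_bij (fun p _ => p.2)
    · intro p hp
      simp only [hF, mem_filter, mem_univ, true_and] at hp ⊢
      rcases hp with ⟨⟨h1, h2⟩, h3⟩
      rw [h3] at h1 h2
      exact ⟨h1, h2⟩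
    · intro p hp q hq hpq
      simp only [hF, mem_filter] at hp hq
      exact Prod.ext (hp.2.trans hq.2.symm) hpq
    · intro b hb
      simp only [mem_filter, mem_univ, true_and] at hb
      refine ⟨(a, b), ?_, rfl⟩
      simp [hF, hb.1, hb.2]
  -- per-fiber bound
  have h2 : ∀ a : L, (univ.filter (fun b => ¬ a ≤ b ∧ ¬ b ≤ a)).card ≤
      Fintype.card L - J.card := by
    intro a
    have hpart := Finset.card_filter_add_card_filter_not
      (s := (univ : Finset L)) (p := fun b => a ≤ b ∨ b ≤ a)
    have heq : (univ.filter (fun b => ¬ (a ≤ b ∨ b ≤ a))) =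
        (univ.filter (fun b => ¬ a ≤ b ∧ ¬ b ≤ a)) := by
      apply Finset.filter_congr
      intro b _
      simp [not_or]
    rw [heq] at hpart
    have := key a
    have hcard : (univ : Finset L).card = Fintype.card L := Finset.card_univ
    omega
  calc F.card = ∑ a : L, (univ.filter (fun b => ¬ a ≤ b ∧ ¬ b ≤ a)).card := hsum
    _ ≤ ∑ _a : L, (Fintype.card L - J.card) := Finset.sum_le_sum (fun a _ => h2 a)
    _ = Fintype.card L * (Fintype.card L - J.card) := by
        simp [Finset.sum_const, Finset.card_univ, mul_comm]
end

section
/- For every finite nonempty distributive lattice L, n(L) ≥ e(L) − |L| + 1, i.e. |{(a,b) ∈ L × L : a ≁ b}| ≥ 2·(e(L) − |L| + 1), where e(L) is the number of covering pairs of L. -/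
open Finset

lemma aux_inf_eq {L : Type*} [Lattice L] {x b c : L} (hb : x ⋖ b) (hc : x ⋖ c) (hne : b ≠ c) :
    b ⊓ c = x := by
  have hx : x ≤ b ⊓ c := le_inf hb.lt.le hc.lt.le
  rcases eq_or_lt_of_le (inf_le_left : b ⊓ c ≤ b) with h | h
  · exfalso
    have hbc : b ≤ c := by rw [← h]; exact inf_le_right
    rcases eq_or_lt_of_le hbc with h2 | h2
    · exact hne h2
    · exact hc.2 hb.lt h2
  · rcases eq_or_lt_of_le hx with h2 | h2
    · exact h2.symm
    · exact absurd h (hb.2 h2)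

/-- For every finite nonempty distributive lattice `L`,
`n(L) ≥ e(L) - |L| + 1`, i.e. the number of ordered incomparable pairs is at least
`2 * (e(L) - |L| + 1)`, where `e(L)` is the number of covering pairs. -/
theorem nL_ge_edges_sub_card_add_one (L : Type*) [DistribLattice L] [Fintype L] [Nonempty L] :
    ({p : L × L | ¬ p.1 ≤ p.2 ∧ ¬ p.2 ≤ p.1}.ncard : ℤ) ≥
      2 * (({p : L × L | p.1 ⋖ p.2}.ncard : ℤ) - (Fintype.card L : ℤ) + 1) := by
  classical
  set t : L := Finset.univ.sup' Finset.univ_nonempty id with ht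
  have htop : ∀ x : L, x ≤ t := fun x => le_sup' id (mem_univ x)
  set U : L → Finset L := fun x => univ.filter (fun b => x ⋖ b) with hU
  set S : Finset (L × L) := univ.filter (fun p => ¬ p.1 ≤ p.2 ∧ ¬ p.2 ≤ p.1) with hS
  set C : Finset (L × L) := univ.filter (fun p => p.1 ⋖ p.2) with hC
  have hSn : ({p : L × L | ¬ p.1 ≤ p.2 ∧ ¬ p.2 ≤ p.1} : Set (L × L)).ncard = S.card := by
    rw [Set.ncard_eq_toFinset_card']
    congr 1
    ext p
    simp [hS]
  have hCn : ({p : L × L | p.1 ⋖ p.2} : Set (L × L)).ncard = C.card := by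
    rw [Set.ncard_eq_toFinset_card']
    congr 1
    ext p
    simp [hC]
  rw [hSn, hCn]
  -- e = ∑ x, (U x).card
  have hCcard : C.card = ∑ x : L, (U x).card := by
    rw [card_eq_sum_card_fiberwise (f := Prod.fst) (t := univ) (fun p _ => mem_univ _)]
    refine Finset.sum_congr rfl fun x _ => ?_
    apply Finset.card_bij (fun p _ => p.2)
    · intro p hp
      simp only [hC, mem_filter, mem_univ, true_and] at hp
      simp [hU, ← hp.2, hp.1]
    · intro p hp q hq h
      simp only [hC, mem_filter, mem_univ, true_and] at hp hq
      exact Prod.ext (hp.2.trans hq.2.symm) h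
    · intro b hb
      simp only [hU, mem_filter, mem_univ, true_and] at hb
      exact ⟨(x, b), by simp [hC, hb], rfl⟩
  -- U t = ∅
  have hUt : U t = ∅ := by
    ext b
    simp only [hU, mem_filter, mem_univ, true_and, Finset.notMem_empty, iff_false]
    intro h
    exact absurd (htop b) h.lt.not_ge
  -- offDiags are within S and pairwise disjoint
  have hsub : (univ.biUnion fun x => (U x).offDiag) ⊆ S := by
    intro p hp
    simp only [mem_biUnion] at hp
    obtain ⟨x, -, hp⟩ := hp
    rw [Finset.mem_offDiag] at hp
    obtain ⟨hb, hc, hne⟩ := hp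
    simp only [hU, mem_filter, mem_univ, true_and] at hb hc
    simp only [hS, mem_filter, mem_univ, true_and]
    constructor
    · intro hle
      rcases eq_or_lt_of_le hle with h | h
      · exact hne h
      · exact hc.2 hb.lt h
    · intro hle
      rcases eq_or_lt_of_le hle with h | h
      · exact hne h.symm
      · exact hb.2 hc.lt h
  have hdisj : ∀ x ∈ (univ : Finset L), ∀ y ∈ (univ : Finset L), x ≠ y →
      Disjoint ((U x).offDiag) ((U y).offDiag) := by
    intro x _ y _ hxy
    rw [Finset.disjoint_left]
    intro p hx hy
    rw [Finset.mem_offDiag] at hx hy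
    obtain ⟨hb, hc, hne⟩ := hx
    obtain ⟨hb', hc', -⟩ := hy
    simp only [hU, mem_filter, mem_univ, true_and] at hb hc hb' hc'
    exact hxy ((aux_inf_eq hb hc hne).symm.trans (aux_inf_eq hb' hc' hne))
  have hsum : ∑ x : L, ((U x).offDiag).card ≤ S.card := by
    rw [← Finset.card_biUnion hdisj]
    exact Finset.card_le_card hsub
  -- every non-top element has a cover
  have hge1 : ∀ x ∈ univ.erase t, 1 ≤ (U x).card := by
    intro x hx
    have hxt : x < t := lt_of_le_of_ne (htop x) (Finset.mem_erase.mp hx).1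
    obtain ⟨b, hb, -⟩ := exists_covBy_le_of_lt hxt
    exact Finset.card_pos.mpr ⟨b, by simp [hU, hb]⟩
  have h0 : ((U t).offDiag).card = 0 := by rw [hUt]; rfl
  have h0' : (U t).card = 0 := by rw [hUt]; rfl
  -- key counting inequality (in ℕ)
  have key : ∑ x ∈ univ.erase t, 2 * ((U x).card - 1) ≤ S.card := by
    calc ∑ x ∈ univ.erase t, 2 * ((U x).card - 1)
        ≤ ∑ x ∈ univ.erase t, ((U x).offDiag).card := by
          refine Finset.sum_le_sum fun x hx => ?_
          rw [Finset.offDiag_card]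
          obtain ⟨n, hn⟩ := Nat.exists_eq_add_of_le (hge1 x hx)
          rw [hn]
          have h4 : (1 + n) * (1 + n) = n * n + 2 * n + 1 := by ring
          have h5 : n ≤ n * n := by
            rcases Nat.eq_zero_or_pos n with h | h
            · simp [h]
            · exact Nat.le_mul_of_pos_left n h
          omega
      _ = ∑ x : L, ((U x).offDiag).card := Finset.sum_erase _ h0
      _ ≤ S.card := hsum
  have hCe : C.card = ∑ x ∈ univ.erase t, (U x).card := by
    rw [hCcard, ← Finset.sum_erase (univ : Finset L) h0']
  have hcard : (univ.erase t).card = Fintype.card L - 1 := by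
    rw [Finset.card_erase_of_mem (mem_univ t), Finset.card_univ]
  -- cast the LHS of `key` to ℤ
  have hcast : ((∑ x ∈ univ.erase t, 2 * ((U x).card - 1) : ℕ) : ℤ) =
      2 * ((C.card : ℤ) - (Fintype.card L : ℤ) + 1) := by
    rw [Nat.cast_sum]
    have h1 : ∀ x ∈ univ.erase t, ((2 * ((U x).card - 1) : ℕ) : ℤ) =
        2 * ((U x).card : ℤ) - 2 := by
      intro x hx
      have hk := hge1 x hx
      push_cast [Nat.cast_sub hk]
      ring
    rw [Finset.sum_congr rfl h1, Finset.sum_sub_distrib, Finset.sum_const, ← Finset.mul_sum,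
      hcard]
    have h2 : (∑ x ∈ univ.erase t, ((U x).card : ℤ)) = (C.card : ℤ) := by
      rw [hCe]; push_cast; rfl
    rw [h2, nsmul_eq_mul, Nat.cast_sub (Nat.one_le_iff_ne_zero.mpr Fintype.card_ne_zero)]
    push_cast
    ring
  rw [ge_iff_le, ← hcast]
  exact_mod_cast key
end

section
/- For every finite nonempty distributive lattice L and every δ ∈ L, f(δ) ≥ |J|, i.e. the number of elements of L comparable to δ is at least the number of join-irreducible elements of L. -/
/-- For every finite nonempty distributive lattice `L` and every `δ ∈ L`,
`f(δ) ≥ |J|`: the number of elements comparable to `δ` is at least the number of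
join-irreducible elements. -/
theorem f_ge_card_joinIrred (L : Type*) [DistribLattice L] [Fintype L] [Nonempty L] (δ : L) :
    {a : L | a ≤ δ ∨ δ ≤ a}.ncard ≥ {a : L | SupIrred a}.ncard := by
  classical
  letI : OrderBot L := Fintype.toOrderBot L
  set g : L → L := fun a =>
    if a ≤ δ then (Finset.univ.filter (fun b => SupIrred b ∧ b ≤ δ ∧ ¬ a ≤ b)).sup id
    else a ⊔ δ with hg
  -- if a ≤ δ then g a ≤ δ
  have hgle : ∀ a : L, a ≤ δ → g a ≤ δ := by
    intro a ha
    simp only [hg, if_pos ha]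
    exact Finset.sup_le fun b hb => by
      simp only [Finset.mem_filter] at hb; exact hb.2.2.1
  -- if a is sup-irreducible and a ≤ δ then ¬ a ≤ g a
  have hnle : ∀ a : L, SupIrred a → a ≤ δ → ¬ a ≤ g a := by
    intro a hairr ha hle
    simp only [hg, if_pos ha] at hle
    obtain ⟨b, hb, hab⟩ := (hairr.supPrime.le_finset_sup).1 hle
    simp only [Finset.mem_filter] at hb
    exact hb.2.2.2 hab
  apply Set.ncard_le_ncard_of_injOn g
  · intro a ha
    simp only [Set.mem_setOf_eq] at ha ⊢
    by_cases h : a ≤ δ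
    · exact Or.inl (hgle a h)
    · simp only [hg, if_neg h]
      exact Or.inr le_sup_right
  · intro a ha a' ha' heq
    simp only [Set.mem_setOf_eq] at ha ha'
    by_cases h : a ≤ δ <;> by_cases h' : a' ≤ δ
    · -- both ≤ δ
      have key : ∀ x y : L, SupIrred x → SupIrred y → x ≤ δ → y ≤ δ → g x = g y → y ≤ x := by
        intro x y hx hy hxδ hyδ hgxy
        by_contra hyx
        have hxT : x ∈ Finset.univ.filter (fun b => SupIrred b ∧ b ≤ δ ∧ ¬ y ≤ b) := by
          simp [hx, hxδ, hyx]
        have : x ≤ g y := by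
          simp only [hg, if_pos hyδ]
          exact Finset.le_sup (f := id) hxT
        exact hnle x hx hxδ (hgxy ▸ this)
      exact le_antisymm (key a' a ha' ha h' h heq.symm) (key a a' ha ha' h h' heq)
    · -- a ≤ δ, a' ≰ δ : impossible
      exfalso
      have h1 : g a ≤ δ := hgle a h
      have h2 : g a' = a' ⊔ δ := by simp only [hg, if_neg h']
      have : a' ≤ δ := le_trans le_sup_left (h2 ▸ heq ▸ h1)
      exact h' this
    · -- a ≰ δ, a' ≤ δ : impossible
      exfalso
      have h1 : g a' ≤ δ := hgle a' h'
      have h2 : g a = a ⊔ δ := by simp only [hg, if_neg h]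
      have : a ≤ δ := le_trans le_sup_left (h2 ▸ heq.symm ▸ h1)
      exact h this
    · -- both ≰ δ
      have h2 : g a = a ⊔ δ := by simp only [hg, if_neg h]
      have h2' : g a' = a' ⊔ δ := by simp only [hg, if_neg h']
      rw [h2, h2'] at heq
      have hle1 : a ≤ a' := by
        have : a ≤ a' ⊔ δ := heq ▸ le_sup_left
        rcases ha.supPrime.le_sup.1 this with h3 | h3
        · exact h3
        · exact absurd h3 h
      have hle2 : a' ≤ a := by
        have : a' ≤ a ⊔ δ := heq ▸ le_sup_left
        rcases ha'.supPrime.le_sup.1 this with h3 | h3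
        · exact h3
        · exact absurd h3 h'
      exact le_antisymm hle1 hle2
end

section
/- Let L be a finite distributive lattice with at least two elements and let α be a maximal join-irreducible element of L (α ∈ J and no element of J is strictly greater than α). Then the pruned subset L_α = {b ∈ L : α ≰ b} is a sublattice of L (closed under ∨ and ∧), and an element x ∈ L_α is join-irreducible in the lattice L_α (with the induced order) if and only if x is join-irreducible in L; consequently the set of join-irreducibles of L_α is J \ {α}. -/
/-- `x` is join-irreducible in the subset `S` (with the order and operations induced
from `L`): `x` is not a minimal element of `S`, and whenever `x = b ⊔ c` with
`b, c ∈ S` one has `b = x` or `c = x`. -/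
def SupIrredIn {L : Type*} [Lattice L] (S : Set L) (x : L) : Prop :=
  (∃ y ∈ S, y < x) ∧ ∀ b ∈ S, ∀ c ∈ S, b ⊔ c = x → b = x ∨ c = x

/-- Let `L` be a finite distributive lattice with at least two elements and
`α` a maximal join-irreducible element. Then the pruned subset `L_α = {b : α ≰ b}` is a
sublattice of `L`; an element `x ∈ L_α` is join-irreducible in `L_α` iff it is
join-irreducible in `L`; consequently the join-irreducibles of `L_α` are `J \ {α}`. -/
theorem pruned_sublattice_supIrred (L : Type*) [DistribLattice L] [Fintype L]
    (h2 : 2 ≤ Fintype.card L) (α : L) (hα : SupIrred α)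
    (hmax : ∀ β : L, SupIrred β → α ≤ β → β = α) :
    (∀ x ∈ {b : L | ¬ α ≤ b}, ∀ y ∈ {b : L | ¬ α ≤ b},
        x ⊔ y ∈ {b : L | ¬ α ≤ b} ∧ x ⊓ y ∈ {b : L | ¬ α ≤ b}) ∧
    (∀ x ∈ {b : L | ¬ α ≤ b}, (SupIrredIn {b : L | ¬ α ≤ b} x ↔ SupIrred x)) ∧
    {x : L | x ∈ {b : L | ¬ α ≤ b} ∧ SupIrredIn {b : L | ¬ α ≤ b} x} =
      {x : L | SupIrred x} \ {α} := by
  have hprime : SupPrime α := hα.supPrime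
  have hiff : ∀ x ∈ {b : L | ¬ α ≤ b}, (SupIrredIn {b : L | ¬ α ≤ b} x ↔ SupIrred x) := by
    intro x hx
    constructor
    · rintro ⟨⟨y, _, hyx⟩, hirr⟩
      refine ⟨fun hmin => (hyx.not_ge (hmin hyx.le)).elim, fun b c hbc => ?_⟩
      have hb : ¬ α ≤ b := fun h => hx (h.trans (hbc ▸ le_sup_left))
      have hc : ¬ α ≤ c := fun h => hx (h.trans (hbc ▸ le_sup_right))
      exact hirr b hb c hc hbc
    · rintro ⟨hmin, hirr⟩
      obtain ⟨y, hyx⟩ := not_isMin_iff.mp hmin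
      refine ⟨⟨y, fun h => hx (h.trans hyx.le), hyx⟩, fun b _ c _ hbc => hirr hbc⟩
  refine ⟨?_, hiff, ?_⟩
  · intro x hx y hy
    refine ⟨fun h => ?_, fun h => hx (h.trans inf_le_left)⟩
    rcases hprime.le_sup.mp h with h | h
    exacts [hx h, hy h]
  · ext x
    simp only [Set.mem_setOf_eq, Set.mem_diff, Set.mem_singleton_iff]
    constructor
    · rintro ⟨hx, hi⟩
      exact ⟨(hiff x hx).mp hi, fun h => hx (h ▸ le_refl α)⟩
    · rintro ⟨hx, hne⟩
      have hmem : ¬ α ≤ x := fun h => hne (hmax x hx h)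
      exact ⟨hmem, (hiff x hmem).mpr hx⟩
end

section
/- Every finite nonempty distributive lattice L is a concatenation of thick sublattices: there exist n ≥ 0 and elements ⊥ = c₀ ≤ c₁ ≤ … ≤ cₙ = ⊤ of L such that L is the union of the closed intervals [cᵢ, cᵢ₊₁] for 0 ≤ i < n (together with L = {⊥} when n = 0), and each interval [cᵢ, cᵢ₊₁] is thick, i.e. every x with cᵢ < x < cᵢ₊₁ is incomparable to some element y ∈ [cᵢ, cᵢ₊₁]. -/
/-- Every finite nonempty distributive lattice `L` is a concatenation of
thick sublattices: there exist `⊥ = c₀ ≤ c₁ ≤ … ≤ cₙ = ⊤` such that `L` is the union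
of the intervals `[cᵢ, cᵢ₊₁]` (or `L = {⊥}` when `n = 0`), and each interval is thick:
every `x` with `cᵢ < x < cᵢ₊₁` is incomparable to some element of `[cᵢ, cᵢ₊₁]`. -/
theorem exists_concat_of_thick (L : Type*) [DistribLattice L] [Fintype L] [Nonempty L]
    [BoundedOrder L] :
    ∃ (n : ℕ) (c : Fin (n + 1) → L), Monotone c ∧ c 0 = ⊥ ∧ c (Fin.last n) = ⊤ ∧
      ((n = 0 ∧ ∀ x : L, x = ⊥) ∨
        ∀ x : L, ∃ i : Fin n, c i.castSucc ≤ x ∧ x ≤ c i.succ) ∧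
      ∀ i : Fin n, ∀ x : L, c i.castSucc < x → x < c i.succ →
        ∃ y ∈ Set.Icc (c i.castSucc) (c i.succ), ¬ x ≤ y ∧ ¬ y ≤ x := by
  classical
  by_cases hbt : (⊥ : L) = ⊤
  · exact ⟨0, fun _ => ⊥, monotone_const, rfl, hbt,
      Or.inl ⟨rfl, fun x => le_antisymm (hbt ▸ le_top) bot_le⟩, fun i => i.elim0⟩
  · set S : Set L := {a | ∀ x : L, a ≤ x ∨ x ≤ a} with hS
    haveI : Fintype S := Fintype.ofFinite S
    letI : LinearOrder S :=
      { (inferInstance : PartialOrder S) with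
        le_total := fun a b => a.2 b
        toDecidableLE := fun a b => Classical.dec _ }
    have hbot : (⊥ : L) ∈ S := fun x => Or.inl bot_le
    have htop : (⊤ : L) ∈ S := fun x => Or.inr le_top
    have hcard2 : 1 < Fintype.card S := by
      apply Fintype.one_lt_card_iff.mpr
      exact ⟨⟨⊥, hbot⟩, ⟨⊤, htop⟩, by simp [hbt]⟩
    set n : ℕ := Fintype.card S - 1 with hn
    have hcard : Fintype.card S = n + 1 := by omega
    have hn1 : 1 ≤ n := by omega
    let e := monoEquivOfFin S hcard
    set c : Fin (n + 1) → L := fun i => (e i : L) with hc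
    have hmono : Monotone c := fun i j h => Subtype.coe_le_coe.2 (e.monotone h)
    have hcS : ∀ i, c i ∈ S := fun i => (e i).2
    have hc0 : c 0 = ⊥ := by
      have h0 : e 0 ≤ ⟨⊥, hbot⟩ := by
        have := e.monotone (Fin.zero_le (e.symm ⟨⊥, hbot⟩))
        rwa [e.apply_symm_apply] at this
      exact le_antisymm h0 bot_le
    have hcl : c (Fin.last n) = ⊤ := by
      have h1 : (⟨⊤, htop⟩ : S) ≤ e (Fin.last n) := by
        have := e.monotone (Fin.le_last (e.symm ⟨⊤, htop⟩))
        rwa [e.apply_symm_apply] at this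
      exact le_antisymm le_top h1
    refine ⟨n, c, hmono, hc0, hcl, Or.inr ?_, ?_⟩
    · intro x
      set T : Finset (Fin (n + 1)) := Finset.univ.filter (fun k => c k ≤ x) with hT
      have hT0 : (0 : Fin (n+1)) ∈ T := by simp [hT, hc0]
      have hTne : T.Nonempty := ⟨0, hT0⟩
      set m : Fin (n + 1) := T.max' hTne with hm
      have hmle : c m ≤ x := by
        have := T.max'_mem hTne
        simpa [hT] using this
      by_cases hml : m = Fin.last n
      · -- x = ⊤
        have hx : x = ⊤ := le_antisymm le_top (by rw [← hcl, ← hml]; exact hmle)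
        refine ⟨⟨n - 1, by omega⟩, le_top.trans hx.ge, ?_⟩
        have hsucc : (⟨n - 1, by omega⟩ : Fin n).succ = Fin.last n := by
          ext; simp; omega
        rw [hsucc, hcl, hx]
      · have hlt : m < Fin.last n := lt_of_le_of_ne (Fin.le_last m) hml
        set i : Fin n := m.castPred hml with hi
        have hics : i.castSucc = m := Fin.castSucc_castPred m hml
        refine ⟨i, by rw [hics]; exact hmle, ?_⟩
        rcases hcS i.succ x with h | h
        · exfalso
          have hmem : i.succ ∈ T := by simp [hT, h]
          have := Finset.le_max' T i.succ hmem
          rw [← hm] at this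
          have h2 : i.castSucc < i.succ := Fin.castSucc_lt_succ (i := i)
          rw [hics] at h2
          exact absurd (lt_of_lt_of_le h2 this) (lt_irrefl m)
        · exact h
    · intro i x h1 h2
      have hxS : x ∉ S := by
        intro hx
        set k : Fin (n + 1) := e.symm ⟨x, hx⟩ with hk
        have hxk : x = c k := by simp [hc, hk]
        rw [hxk] at h1 h2
        have hlt1 : i.castSucc < k := by
          have := Subtype.coe_lt_coe.1 h1
          exact (e.lt_iff_lt).1 this
        have hlt2 : k < i.succ := by
          have := Subtype.coe_lt_coe.1 h2
          exact (e.lt_iff_lt).1 this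
        have : (i.castSucc : ℕ) < (k : ℕ) := hlt1
        have : (k : ℕ) < (i.succ : ℕ) := hlt2
        simp [Fin.coe_castSucc, Fin.val_succ] at *
        omega
      simp only [hS, Set.mem_setOf_eq, not_forall, not_or] at hxS
      obtain ⟨y, hxy, hyx⟩ := hxS
      refine ⟨y, ⟨?_, ?_⟩, hxy, hyx⟩
      · rcases hcS i.castSucc y with h | h
        · exact h
        · exact absurd (h.trans h1.le) hyx
      · rcases hcS i.succ y with h | h
        · exact absurd (h2.le.trans h) hxy
        · exact h
end

section
/- Let k be a field, L a finite distributive lattice, and R = k[x_α : α ∈ L] the polynomial ring with one variable for each element of L. For each incomparable pair θ ≁ δ let f_{θ,δ} = x_θ·x_δ − x_{θ∨δ}·x_{θ∧δ} be the associated diamond relation. Then for every incomparable pair θ ≁ δ, the polynomial f_{θ,δ} does not lie in the ideal of R generated by the diamond relations f_{θ',δ'} of all incomparable pairs {θ', δ'} different from {θ, δ} (as unordered pairs). Consequently the diamond relations form a minimal generating set of the ideal they generate. -/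
open MvPolynomial

private lemma coeff_XX {L k : Type*} [CommSemiring k] [DecidableEq L] (a b : L) (m : L →₀ ℕ) :
    coeff m (X a * X b : MvPolynomial L k) =
      if Finsupp.single a 1 + Finsupp.single b 1 = m then 1 else 0 := by
  rw [X, X, monomial_mul, coeff_monomial, one_mul]

private lemma mem_pair_of_le {L : Type*} [DecidableEq L] {θ δ : L} {b : L →₀ ℕ}
    (hb : b ≤ Finsupp.single θ 1 + Finsupp.single δ 1) {a : L} (ha : 1 ≤ b a) :
    a = θ ∨ a = δ := by
  by_contra hc
  push_neg at hc
  have := Finsupp.le_def.mp hb a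
  rw [Finsupp.add_apply, Finsupp.single_apply, Finsupp.single_apply,
    if_neg (fun h => hc.1 h.symm), if_neg (fun h => hc.2 h.symm)] at this
  omega

/-- Let `k` be a field and `L` a finite distributive lattice. For every
incomparable pair `θ ≁ δ`, the diamond relation
`f_{θ,δ} = X θ * X δ - X (θ ⊔ δ) * X (θ ⊓ δ)` does not lie in the ideal generated by the
diamond relations of all incomparable pairs different from `{θ, δ}` (as unordered pairs).
Hence the diamond relations minimally generate the ideal they generate. -/
theorem diamond_relation_not_mem_span_others (k : Type*) [Field k] (L : Type*)
    [DistribLattice L] [Fintype L] (θ δ : L) (h : ¬ θ ≤ δ ∧ ¬ δ ≤ θ) :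
    (MvPolynomial.X θ * MvPolynomial.X δ -
        MvPolynomial.X (θ ⊔ δ) * MvPolynomial.X (θ ⊓ δ) : MvPolynomial L k) ∉
      Ideal.span {f : MvPolynomial L k | ∃ θ' δ' : L, (¬ θ' ≤ δ' ∧ ¬ δ' ≤ θ') ∧
        ({θ', δ'} : Set L) ≠ {θ, δ} ∧
        f = MvPolynomial.X θ' * MvPolynomial.X δ' -
          MvPolynomial.X (θ' ⊔ δ') * MvPolynomial.X (θ' ⊓ δ')} := by
  classical
  intro hmem
  set m₀ : L →₀ ℕ := Finsupp.single θ 1 + Finsupp.single δ 1 with hm₀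
  -- every element of the span has vanishing coefficients at all monomials ≤ m₀
  have key : ∀ b ≤ m₀, coeff b (MvPolynomial.X θ * MvPolynomial.X δ -
      MvPolynomial.X (θ ⊔ δ) * MvPolynomial.X (θ ⊓ δ) : MvPolynomial L k) = 0 := by
    refine Submodule.span_induction
      (p := fun p _ => ∀ b ≤ m₀, coeff b p = 0) ?_ ?_ ?_ ?_ hmem
    · rintro f ⟨θ', δ', ⟨h1, h2⟩, hne, rfl⟩ b hb
      rw [coeff_sub, coeff_XX, coeff_XX]
      rw [if_neg, if_neg, sub_zero]
      · -- the join/meet monomial is not ≤ m₀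
        intro heq
        have hble : Finsupp.single (θ' ⊔ δ') 1 + Finsupp.single (θ' ⊓ δ') 1 ≤ m₀ :=
          heq ▸ hb
        have hsup : θ' ⊔ δ' = θ ∨ θ' ⊔ δ' = δ := by
          refine mem_pair_of_le hble ?_
          simp [Finsupp.add_apply, Finsupp.single_apply]
        have hinf : θ' ⊓ δ' = θ ∨ θ' ⊓ δ' = δ := by
          refine mem_pair_of_le hble ?_
          have : (Finsupp.single (θ' ⊓ δ') 1) (θ' ⊓ δ') = 1 := Finsupp.single_eq_same
          simp [Finsupp.add_apply, Finsupp.single_apply]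
        have hneq : θ' ⊔ δ' ≠ θ' ⊓ δ' := by
          intro he
          have h1' : θ' ≤ δ' := le_trans (le_sup_left.trans he.le) inf_le_right
          exact h1 h1'
        have hle : θ' ⊓ δ' ≤ θ' ⊔ δ' := inf_le_sup
        rcases hsup with hs | hs <;> rcases hinf with hi | hi
        · exact hneq (hs.trans hi.symm)
        · exact h.2 (hi ▸ hs ▸ hle)
        · exact h.1 (hs ▸ hi ▸ hle)
        · exact hneq (hs.trans hi.symm)
      · -- the θ'δ' monomial is not ≤ m₀
        intro heq
        have hble : Finsupp.single θ' 1 + Finsupp.single δ' 1 ≤ m₀ := heq ▸ hb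
        have hθ' : θ' = θ ∨ θ' = δ := by
          refine mem_pair_of_le hble ?_
          simp [Finsupp.add_apply, Finsupp.single_apply]
        have hδ' : δ' = θ ∨ δ' = δ := by
          refine mem_pair_of_le hble ?_
          simp [Finsupp.add_apply, Finsupp.single_apply]
        have hne' : θ' ≠ δ' := fun he => h1 he.le
        apply hne
        rcases hθ' with hθ' | hθ' <;> rcases hδ' with hδ' | hδ'
        · exact absurd (hθ'.trans hδ'.symm) hne'
        · rw [hθ', hδ']
        · rw [hθ', hδ', Set.pair_comm]
        · exact absurd (hθ'.trans hδ'.symm) hne'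
    · intro b _; simp
    · intro p q _ _ hp hq b hb
      rw [coeff_add, hp b hb, hq b hb, add_zero]
    · intro c p _ hp b hb
      rw [smul_eq_mul, coeff_mul]
      refine Finset.sum_eq_zero fun x hx => ?_
      rw [Finset.HasAntidiagonal.mem_antidiagonal] at hx
      have : x.2 ≤ m₀ := le_trans (le_add_self (a := x.2) (b := x.1)) (hx ▸ hb)
      rw [hp x.2 this, mul_zero]
  have h0 := key m₀ le_rfl
  rw [coeff_sub, coeff_XX, coeff_XX, if_pos rfl] at h0
  rw [if_neg, sub_zero] at h0
  · exact one_ne_zero h0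
  · intro heq
    have := DFunLike.congr_fun heq θ
    have hδθ : δ ≠ θ := fun he => h.2 he.le
    have hsθ : θ ⊔ δ ≠ θ := fun he => h.2 (le_sup_right.trans he.le)
    have hiθ : θ ⊓ δ ≠ θ := fun he => h.1 (he.symm.le.trans inf_le_right)
    rw [Finsupp.add_apply, Finsupp.add_apply, Finsupp.single_apply, Finsupp.single_apply,
      Finsupp.single_apply, Finsupp.single_apply, if_pos rfl, if_neg hδθ,
      if_neg hsθ, if_neg hiθ] at this
    omega
end
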